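/- Let f : ℝ → ℝ be locally absolutely continuous with derivative f' ∈ L^1(ℝ). Let γ_1 > 0 and γ_2 ≥ 0 be constants and let h : ℝ → ℝ be a Lipschitz function with h'(x) ≥ γ_1 for a.e. x ∈ ℝ and |h(x) − x| ≤ γ_2 for all x ∈ ℝ. Then f − f∘h ∈ L^1(ℝ) and ∫_ℝ |f(x) − f(h(x))| dx ≤ (γ_2 / min{1, γ_1}) · ‖f'‖_{L^1(ℝ)}. -/

import Mathlib

/-!
Writing `f x - f (h x) = ∫_{h x}^{x} g` and applying Tonelli gives
`∫ |f - f ∘ h| ≤ ∫ |g t| · |{x | t lies between h x and x}| dt`.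
As an absolutely continuous function with `h' ≥ γ₁ > 0` a.e., `h` is strictly increasing, and
it is onto since it stays within `γ₂` of the identity; so for `t = h y` that set lies between
`h y` and `y`, and has measure at most `|h y - y| ≤ γ₂`. This even gives the constant `γ₂`,
which is at most `γ₂ / min 1 γ₁`.
-/

open MeasureTheory Filter Set
open scoped ENNReal NNReal Interval

lemma LipschitzWith.mul_sub_le_sub_of_ae_le_deriv {h : ℝ → ℝ} {L : ℝ≥0} (hh : LipschitzWith L h)
    {c : ℝ} (hder : ∀ᵐ x, ∃ d, HasDerivAt h d x ∧ c ≤ d) {a b : ℝ} (hab : a ≤ b) :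
    c * (b - a) ≤ h b - h a := by
  have hac := (hh.lipschitzOnWith (s := uIcc a b)).absolutelyContinuousOnInterval
  calc c * (b - a) = ∫ _ in a..b, c := by simp [mul_comm]
    _ ≤ ∫ x in a..b, deriv h x := by
      refine intervalIntegral.integral_mono_ae hab intervalIntegrable_const
        hac.intervalIntegrable_deriv ?_
      filter_upwards [hder] with x ⟨d, hd, hcd⟩
      exact hd.deriv ▸ hcd
    _ = h b - h a := hac.integral_deriv_eq_sub

lemma LipschitzWith.strictMono_of_ae_le_deriv {h : ℝ → ℝ} {L : ℝ≥0} (hh : LipschitzWith L h)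
    {c : ℝ} (hc : 0 < c) (hder : ∀ᵐ x, ∃ d, HasDerivAt h d x ∧ c ≤ d) : StrictMono h :=
  fun a b hab => by
    have := hh.mul_sub_le_sub_of_ae_le_deriv hder hab.le
    nlinarith

lemma Continuous.surjective_of_abs_sub_id_le {h : ℝ → ℝ} (hh : Continuous h) {C : ℝ}
    (hC : ∀ x, |h x - x| ≤ C) : Function.Surjective h := by
  refine hh.surjective
    (tendsto_atTop_mono (fun x => ?_) (tendsto_atTop_add_const_right _ (-C) tendsto_id))
    (tendsto_atBot_mono (fun x => ?_) (tendsto_atBot_add_const_right _ C tendsto_id))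
  · linarith [(abs_le.mp (hC x)).1, show id x = x from rfl]
  · linarith [(abs_le.mp (hC x)).2, show id x = x from rfl]

lemma StrictMono.setOf_mem_uIoc_subset_uIcc {h : ℝ → ℝ} (hh : StrictMono h) (y : ℝ) :
    {x | h y ∈ Ι (h x) x} ⊆ uIcc (h y) y := by
  rintro x ⟨hlow, hup⟩
  rcases le_total x y with hxy | hyx
  · rcases le_sup_iff.mp hup with hyx | hyx
    · obtain rfl : x = y := hh.injective (le_antisymm (hh.monotone hxy) hyx)
      exact right_mem_uIcc
    · exact mem_uIcc.mpr (Or.inl ⟨hyx, hxy⟩)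
  · have : h y ≤ h x := hh.monotone hyx
    rcases inf_lt_iff.mp hlow with hxy | hxy
    · exact absurd this (not_le.mpr hxy)
    · exact mem_uIcc.mpr (Or.inr ⟨hyx, hxy.le⟩)

lemma StrictMono.volume_setOf_mem_uIoc_le {h : ℝ → ℝ} (hh : StrictMono h) (hc : Continuous h)
    {C : ℝ} (hC : ∀ x, |h x - x| ≤ C) (t : ℝ) :
    volume {x | t ∈ Ι (h x) x} ≤ ENNReal.ofReal C := by
  obtain ⟨y, rfl⟩ := hc.surjective_of_abs_sub_id_le hC t
  calc volume {x | h y ∈ Ι (h x) x} ≤ volume (uIcc (h y) y) :=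
        measure_mono (hh.setOf_mem_uIoc_subset_uIcc y)
    _ = ENNReal.ofReal |y - h y| := Real.volume_interval
    _ ≤ ENNReal.ofReal C := ENNReal.ofReal_le_ofReal (abs_sub_comm y (h y) ▸ hC y)

lemma enorm_intervalIntegral_le_lintegral_uIoc (g : ℝ → ℝ) (a b : ℝ) :
    ‖∫ t in a..b, g t‖ₑ ≤ ∫⁻ t in Ι a b, ‖g t‖ₑ := by
  rw [← enorm_norm, intervalIntegral.norm_integral_eq_norm_integral_uIoc, enorm_norm]
  exact enorm_integral_le_lintegral_enorm _

lemma lintegral_setLIntegral_preimage_prodMk_eq {α β : Type*} [MeasurableSpace α]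
    [MeasurableSpace β] {μ : Measure α} {ν : Measure β} [SFinite μ] [SFinite ν]
    {S : Set (α × β)} (hS : MeasurableSet S) {N : β → ℝ≥0∞} (hN : AEMeasurable N ν) :
    ∫⁻ x, ∫⁻ t in Prod.mk x ⁻¹' S, N t ∂ν ∂μ = ∫⁻ t, μ ((·, t) ⁻¹' S) * N t ∂ν := by
  have hF : AEMeasurable (S.indicator fun p => N p.2) (μ.prod ν) :=
    (hN.comp_quasiMeasurePreserving Measure.quasiMeasurePreserving_snd).indicator hS
  calc ∫⁻ x, ∫⁻ t in Prod.mk x ⁻¹' S, N t ∂ν ∂μ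
      = ∫⁻ x, ∫⁻ t, S.indicator (fun p => N p.2) (x, t) ∂ν ∂μ := by
        refine lintegral_congr fun x => ?_
        rw [← lintegral_indicator (measurable_prodMk_left hS)]
        rfl
    _ = ∫⁻ t, ∫⁻ x, S.indicator (fun p => N p.2) (x, t) ∂μ ∂ν := lintegral_lintegral_swap hF
    _ = ∫⁻ t, μ ((·, t) ⁻¹' S) * N t ∂ν := by
        refine lintegral_congr fun t => ?_
        rw [mul_comm, ← lintegral_indicator_const (measurable_prodMk_right hS)]
        rfl

lemma measurableSet_setOf_mem_uIoc {φ : ℝ → ℝ} (hφ : Measurable φ) :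
    MeasurableSet {p : ℝ × ℝ | p.2 ∈ Ι (φ p.1) p.1} :=
  (measurableSet_lt ((hφ.comp measurable_fst).min measurable_fst) measurable_snd).inter
    (measurableSet_le measurable_snd ((hφ.comp measurable_fst).max measurable_fst))

lemma continuous_of_sub_eq_intervalIntegral {f g : ℝ → ℝ} (hg : Integrable g)
    (hfg : ∀ x y, f y - f x = ∫ t in x..y, g t) : Continuous f := by
  have hf : f = fun x => (∫ t in (0 : ℝ)..x, g t) + f 0 := funext fun x => by linarith [hfg 0 x]
  rw [hf]
  exact (hg.continuous_primitive 0).add continuous_const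

section DisplacementBound

variable {f g φ : ℝ → ℝ} (hfg : ∀ x y, f y - f x = ∫ t in x..y, g t) (hφ : Measurable φ)
include hfg hφ

lemma lintegral_enorm_sub_comp_le (hg : AEMeasurable g) {C : ℝ≥0∞}
    (hC : ∀ t, volume {x | t ∈ Ι (φ x) x} ≤ C) :
    ∫⁻ x, ‖f x - f (φ x)‖ₑ ≤ C * ∫⁻ t, ‖g t‖ₑ :=
  calc ∫⁻ x, ‖f x - f (φ x)‖ₑ ≤ ∫⁻ x, ∫⁻ t in Ι (φ x) x, ‖g t‖ₑ :=
        lintegral_mono fun x => hfg (φ x) x ▸ enorm_intervalIntegral_le_lintegral_uIoc g _ _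
    _ = ∫⁻ t, volume {x | t ∈ Ι (φ x) x} * ‖g t‖ₑ :=
        lintegral_setLIntegral_preimage_prodMk_eq (measurableSet_setOf_mem_uIoc hφ) hg.enorm
    _ ≤ ∫⁻ t, C * ‖g t‖ₑ := lintegral_mono fun t => mul_le_mul_left (hC t) _
    _ = C * ∫⁻ t, ‖g t‖ₑ := lintegral_const_mul'' C hg.enorm

variable (hg : Integrable g) {C : ℝ} (hC : ∀ t, volume {x | t ∈ Ι (φ x) x} ≤ ENNReal.ofReal C)
include hg hC

lemma integrable_sub_comp : Integrable fun x => f x - f (φ x) := by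
  have hf := (continuous_of_sub_eq_intervalIntegral hg hfg).measurable
  refine ⟨(hf.sub (hf.comp hφ)).aestronglyMeasurable, ?_⟩
  exact (lintegral_enorm_sub_comp_le hfg hφ hg.aemeasurable hC).trans_lt
    (ENNReal.mul_lt_top ENNReal.ofReal_lt_top hg.hasFiniteIntegral)

lemma integral_abs_sub_comp_le (hC0 : 0 ≤ C) :
    ∫ x, |f x - f (φ x)| ≤ C * ∫ t, |g t| := by
  simp only [← Real.norm_eq_abs]
  rw [integral_norm_eq_lintegral_enorm (integrable_sub_comp hfg hφ hg hC).aestronglyMeasurable]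
  refine ENNReal.toReal_le_of_le_ofReal (by positivity) ?_
  rw [ENNReal.ofReal_mul hC0, ofReal_integral_norm_eq_lintegral_enorm hg]
  exact lintegral_enorm_sub_comp_le hfg hφ hg.aemeasurable hC

end DisplacementBound

theorem stmt_9 (f g : ℝ → ℝ) (hg : Integrable g)
    (hfg : ∀ x y : ℝ, f y - f x = ∫ t in x..y, g t)
    (γ1 γ2 : ℝ) (hγ1 : 0 < γ1) (hγ2 : 0 ≤ γ2)
    (h : ℝ → ℝ) (L : NNReal) (hLip : LipschitzWith L h)
    (hder : ∀ᵐ x : ℝ, ∃ d, HasDerivAt h d x ∧ γ1 ≤ d)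
    (hdist : ∀ x : ℝ, |h x - x| ≤ γ2) :
    Integrable (fun x => f x - f (h x)) ∧
    (∫ x : ℝ, |f x - f (h x)|) ≤ (γ2 / min 1 γ1) * ∫ t : ℝ, |g t| := by
  have hvol := (hLip.strictMono_of_ae_le_deriv hγ1 hder).volume_setOf_mem_uIoc_le
    hLip.continuous hdist
  have hh := hLip.continuous.measurable
  refine ⟨integrable_sub_comp hfg hh hg hvol, ?_⟩
  calc ∫ x, |f x - f (h x)| ≤ γ2 * ∫ t, |g t| := integral_abs_sub_comp_le hfg hh hg hvol hγ2
    _ ≤ γ2 / min 1 γ1 * ∫ t, |g t| :=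
      mul_le_mul_of_nonneg_right (le_div_self hγ2 (lt_min one_pos hγ1) (min_le_left _ _))
        (integral_nonneg fun t => abs_nonneg _)
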